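/- The constant 2+√2 is optimal in the tetrahedral inequality: for every k < 2+√2 there exists a tetrahedron with edge lengths a₁,…,a₆ (faces (a₁,a₂,a₃), (a₃,a₄,a₅), (a₁,a₄,a₆), (a₂,a₅,a₆)) such that the sum over the four faces of [√(x²+y²)+√(y²+z²)+√(z²+x²)] exceeds k·(a₁+⋯+a₆). -/

import Mathlib

/-!
Since `√(x² + y²) ≥ (x + y)/√2` and `√(y² + z²) ≥ y`, `√(z² + x²) ≥ x`, every face contributes at
least `(1 + √2/2)` times the sum of any two of its sides. In a tetrahedron whose opposite edges
`AB` and `CD` have length `ε` while `CA` has length `1`, each face contains exactly two of the four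
remaining edges, so the left-hand side is at least `(2 + √2) L`, where `L ≥ 1` is the total length
of those four edges, whereas the right-hand side is `k (L + 2ε)`. Letting `ε → 0` beats every
`k < 2 + √2`.
-/

/-- Sum over one triangular face of the square-root expression. -/
noncomputable def faceSum (x y z : ℝ) : ℝ :=
  Real.sqrt (x ^ 2 + y ^ 2) + Real.sqrt (y ^ 2 + z ^ 2) + Real.sqrt (z ^ 2 + x ^ 2)

open Real EuclideanSpace

lemma sqrt_two_div_two_mul_add_le_sqrt_sq_add_sq (x y : ℝ) :
    √2 / 2 * (x + y) ≤ √(x ^ 2 + y ^ 2) := by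
  apply Real.le_sqrt_of_sq_le
  have h2 : √2 ^ 2 = 2 := sq_sqrt zero_le_two
  nlinarith [sq_nonneg (x - y)]

lemma le_sqrt_sq_add_sq (x y : ℝ) : x ≤ √(x ^ 2 + y ^ 2) :=
  Real.le_sqrt_of_sq_le (le_add_of_nonneg_right (sq_nonneg y))

lemma faceSum_rotate (x y z : ℝ) : faceSum x y z = faceSum y z x := by
  unfold faceSum; ring

lemma one_add_sqrt_two_div_two_mul_le_faceSum (x y z : ℝ) :
    (1 + √2 / 2) * (x + y) ≤ faceSum x y z := by
  have hxy := sqrt_two_div_two_mul_add_le_sqrt_sq_add_sq x y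
  have hy := le_sqrt_sq_add_sq y z
  have hx := le_sqrt_sq_add_sq x z
  rw [add_comm (x ^ 2)] at hx
  unfold faceSum
  linarith

lemma two_add_sqrt_two_mul_le_sum_faceSum (a₁ a₂ a₃ a₄ a₅ a₆ : ℝ) :
    (2 + √2) * (a₂ + a₃ + a₄ + a₆) ≤
      faceSum a₁ a₂ a₃ + faceSum a₃ a₄ a₅ + faceSum a₁ a₄ a₆ + faceSum a₂ a₅ a₆ := by
  have h₁ := (one_add_sqrt_two_div_two_mul_le_faceSum a₂ a₃ a₁).trans_eq
    (faceSum_rotate a₁ a₂ a₃).symm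
  have h₂ := one_add_sqrt_two_div_two_mul_le_faceSum a₃ a₄ a₅
  have h₃ := (one_add_sqrt_two_div_two_mul_le_faceSum a₄ a₆ a₁).trans_eq
    (faceSum_rotate a₁ a₄ a₆).symm
  have h₄ := (one_add_sqrt_two_div_two_mul_le_faceSum a₆ a₂ a₅).trans_eq
    (faceSum_rotate a₆ a₂ a₅)
  linarith

lemma affineIndependent_tetrahedron {ε : ℝ} (hε : ε ≠ 0) :
    AffineIndependent ℝ
      ![(0 : EuclideanSpace ℝ (Fin 3)), single 0 ε, single 1 1, single 1 1 + single 2 ε] := by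
  rw [affineIndependent_iff_of_fintype]
  intro w hw hv
  rw [Finset.univ.weightedVSub_eq_linear_combination hw, Fin.sum_univ_four] at hv
  -- coordinatewise: `w 1 * ε = 0`, `w 2 + w 3 = 0`, `w 3 * ε = 0`
  have hv₀ := congrArg (· 0) hv
  have hv₁ := congrArg (· 1) hv
  have hv₂ := congrArg (· 2) hv
  simp only [Matrix.cons_val_zero, Matrix.cons_val_one, Matrix.cons_val, smul_zero, smul_add,
    smul_eq_mul, PiLp.add_apply, PiLp.smul_apply, PiLp.zero_apply, PiLp.single_eq_same,
    PiLp.single_eq_of_ne, Fin.reduceEq, ne_eq, zero_ne_one, one_ne_zero, not_false_eq_true,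
    zero_add, add_zero, mul_zero, mul_one, mul_eq_zero, hε, or_false] at hv₀ hv₁ hv₂
  rw [Fin.sum_univ_four] at hw
  intro i
  fin_cases i <;> simp <;> linarith

lemma lt_sum_faceSum_of_short_opposite_edges {k ε a₂ a₄ a₆ : ℝ} (hk : k < 2 + √2)
    (hkε : 2 * k * ε < 2 + √2 - k) (ha₂ : 0 ≤ a₂) (ha₄ : 0 ≤ a₄) (ha₆ : 0 ≤ a₆) :
    k * (ε + a₂ + 1 + a₄ + ε + a₆) <
      faceSum ε a₂ 1 + faceSum 1 a₄ ε + faceSum ε a₄ a₆ + faceSum a₂ ε a₆ := by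
  have hsum := two_add_sqrt_two_mul_le_sum_faceSum ε a₂ 1 a₄ ε a₆
  have hlong := mul_nonneg (sub_pos.mpr hk).le (add_nonneg (add_nonneg ha₂ ha₄) ha₆)
  linarith

theorem stmt_16 (k : ℝ) (hk : k < 2 + Real.sqrt 2) :
    ∃ (A B C D : EuclideanSpace ℝ (Fin 3)) (a₁ a₂ a₃ a₄ a₅ a₆ : ℝ),
      AffineIndependent ℝ ![A, B, C, D] ∧
      a₁ = dist A B ∧ a₂ = dist B C ∧ a₃ = dist C A ∧
      a₄ = dist A D ∧ a₅ = dist D C ∧ a₆ = dist B D ∧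
      faceSum a₁ a₂ a₃ + faceSum a₃ a₄ a₅ + faceSum a₁ a₄ a₆ + faceSum a₂ a₅ a₆ >
        k * (a₁ + a₂ + a₃ + a₄ + a₅ + a₆) := by
  obtain ⟨ε, hε, hkε⟩ := exists_pos_mul_lt (sub_pos.mpr hk) (2 * k)
  refine ⟨0, single 0 ε, single 1 1, single 1 1 + single 2 ε, _, _, _, _, _, _,
    affineIndependent_tetrahedron hε.ne', rfl, rfl, rfl, rfl, rfl, rfl, ?_⟩
  have hAB : dist 0 (single (0 : Fin 3) ε) = ε := by simp [hε.le]
  have hCA : dist (single (1 : Fin 3) (1 : ℝ)) 0 = 1 := by simp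
  have hDC : dist (single 1 1 + single (2 : Fin 3) ε) (single 1 1) = ε := by
    simp [dist_eq_norm, hε.le]
  rw [hAB, hCA, hDC]
  exact lt_sum_faceSum_of_short_opposite_edges hk hkε dist_nonneg dist_nonneg dist_nonneg
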